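/- arXiv:1805.12538 — 3 statements merged into one kernel-verified Lean document; each statement's English description precedes it below -/
import Mathlib

section
/- Let M be a finite group and let e be a positive integer such that the exponent of the automorphism group Aut(M) divides e. Let G be a group, let H be a subgroup of G whose index [G:H] is finite and coprime to e, and let φ : G → Aut(M) be a group homomorphism. Then φ(H) = φ(G), i.e. the image of H under φ equals the image of G under φ. -/
/-- Let `M` be a finite group and let `e` be a positive integer such that the exponent of
`Aut(M)` divides `e`. Let `G` be a group, `H ≤ G` a subgroup whose index `[G:H]` is finite
and coprime to `e`, and `φ : G → Aut(M)` a group homomorphism. Then `φ(H) = φ(G)`. -/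
theorem stmt_0 {M : Type*} [Group M] [Finite M] (e : ℕ) (he : 0 < e)
    (hexp : Monoid.exponent (MulAut M) ∣ e)
    {G : Type*} [Group G] (H : Subgroup G) (hfin : H.index ≠ 0)
    (hcop : Nat.Coprime H.index e)
    (φ : G →* MulAut M) :
    H.map φ = φ.range := by
  have hFin : Finite (MulAut M) := inferInstance
  set L : Subgroup φ.range := H.map φ.rangeRestrict with hL
  have hdvd : L.index ∣ H.index := H.index_map_dvd φ.rangeRestrict_surjective
  have hcard : L.index ∣ Nat.card φ.range := L.index_dvd_card
  have hcard0 : Nat.card φ.range ≠ 0 := Nat.card_pos.ne'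
  have hLe : Nat.Coprime L.index e := Nat.Coprime.coprime_dvd_left hdvd hcop
  have hL1 : L.index = 1 := by
    by_contra h1
    have h0 : L.index ≠ 0 := fun h => hcard0 (Nat.eq_zero_of_zero_dvd (h ▸ hcard))
    set p := L.index.minFac with hp
    have hpp : p.Prime := Nat.minFac_prime h1
    have hpd : p ∣ Nat.card φ.range := (Nat.minFac_dvd _).trans hcard
    have : Fact p.Prime := ⟨hpp⟩
    obtain ⟨x, hx⟩ := exists_prime_orderOf_dvd_card' (G := φ.range) p hpd
    have hxe : x ^ e = 1 := by
      have : (x : MulAut M) ^ e = 1 :=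
        orderOf_dvd_iff_pow_eq_one.mp ((Monoid.order_dvd_exponent _).trans hexp)
      exact Subtype.ext (by simpa using this)
    have hpe : p ∣ e := hx ▸ orderOf_dvd_of_pow_eq_one hxe
    have hp1 : p = 1 := Nat.eq_one_of_dvd_one (hLe ▸ Nat.dvd_gcd (Nat.minFac_dvd _) hpe)
    exact hpp.one_lt.ne' hp1
  have htop : L = ⊤ := Subgroup.index_eq_one.mp hL1
  calc H.map φ = (H.map φ.rangeRestrict).map φ.range.subtype := by
        rw [Subgroup.map_map, MonoidHom.subtype_comp_rangeRestrict]
      _ = φ.range := by rw [← hL, htop, ← MonoidHom.range_eq_map, Subgroup.range_subtype]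
end

section
/- Let p be a prime and let m ≥ 1 and n ≥ 1 be integers. Let G be a group, let H be a subgroup of G whose index [G:H] is finite and coprime to p, and let φ : G → GL_m(ℤ/p^nℤ) be a group homomorphism. Let α : GL_m(ℤ/p^nℤ) → GL_m(ℤ/pℤ) be the reduction homomorphism. If α(φ(H)) = α(φ(G)), then φ(H) = φ(G). -/
open Finset in
private lemma aux1 (p j : ℕ) (hj : 1 ≤ j) {R : Type*} [Ring R] (x : R)
    (hx : (p : R) ^ j ∣ x) : (p : R) ^ (j + 1) ∣ ((1 + x) ^ p - 1) := by
  obtain ⟨A, rfl⟩ := hx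
  set c : R := (p : R) with hc
  have hcomm : Commute c A := Nat.cast_commute p A
  have h1 : Commute (c ^ j * A) (1 : R) := Commute.one_right _
  rw [add_comm (1 : R), h1.add_pow]
  rw [Finset.sum_range_succ']
  simp only [pow_zero, Nat.choose_zero_right, Nat.cast_one, mul_one, one_mul, one_pow,
    Nat.sub_zero, add_sub_cancel_right]
  apply Finset.dvd_sum
  intro i hi
  rcases i with _ | i'
  · -- term m = 1
    simp only [zero_add, pow_one, Nat.choose_one_right]
    refine ⟨A, ?_⟩
    rw [mul_assoc, ← hcomm.eq, ← mul_assoc, ← pow_succ]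
  · -- term m = i'+2
    have hx : (c ^ j * A) ^ (i' + 1 + 1) = c ^ (j * (i' + 2)) * A ^ (i' + 2) := by
      rw [(hcomm.pow_left j).mul_pow, ← pow_mul]
    rw [hx]
    have hle : j + 1 ≤ j * (i' + 2) := by nlinarith
    rw [mul_assoc]
    exact (pow_dvd_pow c hle).mul_right _

private lemma aux2 (p : ℕ) {R : Type*} [Ring R] (x : R) (hx : (p : R) ∣ x) :
    ∀ k, (p : R) ^ (k + 1) ∣ ((1 + x) ^ (p ^ k) - 1)
  | 0 => by simpa using hx
  | k + 1 => by
    obtain ⟨B, hB⟩ := aux2 p x hx k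
    have h1 : (1 + x) ^ (p ^ k) = 1 + (p : R) ^ (k + 1) * B := eq_add_of_sub_eq' hB
    have h2 : (1 + x) ^ (p ^ (k + 1)) = ((1 + x) ^ (p ^ k)) ^ p := by
      rw [← pow_mul, ← pow_succ]
    rw [h2, h1]
    exact aux1 p (k + 1) (by omega) _ ⟨B, rfl⟩

private lemma auxz (p n : ℕ) (hp : p.Prime) (hn : 1 ≤ n) (z : ZMod (p ^ n))
    (hz : ZMod.castHom (dvd_pow_self p (Nat.one_le_iff_ne_zero.mp hn)) (ZMod p) z = 0) :
    (p : ZMod (p ^ n)) ∣ z := by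
  haveI : NeZero (p ^ n) := ⟨pow_ne_zero n hp.pos.ne'⟩
  have h1 : ((z.val : ℕ) : ZMod p) = 0 := by
    rw [ZMod.natCast_val]
    simpa [ZMod.castHom_apply] using hz
  obtain ⟨t, ht⟩ := (ZMod.natCast_eq_zero_iff _ _).mp h1
  have h2 : ((z.val : ℕ) : ZMod (p ^ n)) = z := by
    rw [ZMod.natCast_val, ZMod.cast_id]
  refine ⟨(t : ZMod (p ^ n)), ?_⟩
  rw [← h2, ht]
  push_cast
  ring

private lemma aux3 (p n m : ℕ) (hp : p.Prime) (hn : 1 ≤ n) (hm : 1 ≤ m)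
    (M : Matrix (Fin m) (Fin m) (ZMod (p ^ n)))
    (hM : ((p : ℕ) : Matrix (Fin m) (Fin m) (ZMod (p ^ n))) ∣ (M - 1)) :
    M ^ (p ^ (n - 1)) = 1 := by
  haveI : Nonempty (Fin m) := ⟨⟨0, hm⟩⟩
  have h := aux2 p (M - 1) hM (n - 1)
  rw [show (1 : Matrix (Fin m) (Fin m) (ZMod (p ^ n))) + (M - 1) = M from by abel,
    show n - 1 + 1 = n from by omega] at h
  have hc : ((p : ℕ) : Matrix (Fin m) (Fin m) (ZMod (p ^ n))) ^ n = 0 := by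
    rw [← Nat.cast_pow]
    exact CharP.cast_eq_zero _ _
  rw [hc] at h
  obtain ⟨B, hB⟩ := h
  rw [zero_mul] at hB
  linear_combination (norm := noncomm_ring) hB

private lemma aux4 (p n m : ℕ) (hp : p.Prime) (hn : 1 ≤ n) (hm : 1 ≤ m)
    (u : Matrix.GeneralLinearGroup (Fin m) (ZMod (p ^ n)))
    (hu : Matrix.GeneralLinearGroup.map
      (ZMod.castHom (dvd_pow_self p (Nat.one_le_iff_ne_zero.mp hn)) (ZMod p)) u = 1) :
    u ^ (p ^ (n - 1)) = 1 := by
  set f := ZMod.castHom (dvd_pow_self p (Nat.one_le_iff_ne_zero.mp hn)) (ZMod p) with hf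
  have h1 : (u : Matrix (Fin m) (Fin m) (ZMod (p ^ n))).map f = 1 := by
    have h := congrArg Units.val hu
    simpa [Matrix.GeneralLinearGroup.map, RingHom.mapMatrix_apply] using h
  have hdvd : ∀ i j, (p : ZMod (p ^ n)) ∣
      ((u : Matrix (Fin m) (Fin m) (ZMod (p ^ n))) - 1) i j := by
    intro i j
    apply auxz p n hp hn
    have h2 : f (((u : Matrix (Fin m) (Fin m) (ZMod (p ^ n))) - 1) i j)
        = ((u : Matrix (Fin m) (Fin m) (ZMod (p ^ n))).map f - 1) i j := by
      simp [Matrix.sub_apply, Matrix.map_apply, map_sub, Matrix.one_apply, apply_ite f]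
    rw [← hf, h2, h1, sub_self, Matrix.zero_apply]
  have hMdvd : ((p : ℕ) : Matrix (Fin m) (Fin m) (ZMod (p ^ n))) ∣
      ((u : Matrix (Fin m) (Fin m) (ZMod (p ^ n))) - 1) := by
    refine ⟨Matrix.of (fun i j => (hdvd i j).choose), ?_⟩
    ext i j
    rw [← nsmul_eq_mul, Matrix.smul_apply]
    simpa [nsmul_eq_mul] using (hdvd i j).choose_spec
  have hfin := aux3 p n m hp hn hm _ hMdvd
  apply Units.ext
  rw [Units.val_pow_eq_pow_val, Units.val_one]
  exact hfin


/-- Let `p` be prime, `m, n ≥ 1`, `G` a group, `H ≤ G` of finite index coprime to `p`, and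
`φ : G → GL_m(ℤ/p^nℤ)` a homomorphism. If the images of `H` and `G` under the composite with
the reduction `α : GL_m(ℤ/p^nℤ) → GL_m(ℤ/pℤ)` agree, then `φ(H) = φ(G)`. -/
theorem stmt_4 (p : ℕ) (hp : p.Prime) (m n : ℕ) (hm : 1 ≤ m) (hn : 1 ≤ n)
    {G : Type*} [Group G] (H : Subgroup G) (hfin : H.index ≠ 0)
    (hcop : Nat.Coprime H.index p)
    (φ : G →* Matrix.GeneralLinearGroup (Fin m) (ZMod (p ^ n)))
    (α : Matrix.GeneralLinearGroup (Fin m) (ZMod (p ^ n)) →*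
        Matrix.GeneralLinearGroup (Fin m) (ZMod p))
    (hα : α = Matrix.GeneralLinearGroup.map
        (ZMod.castHom (dvd_pow_self p (Nat.one_le_iff_ne_zero.mp hn)) (ZMod p)))
    (him : (H.map φ).map α = (φ.range).map α) :
    H.map φ = φ.range := by
  haveI : Fact p.Prime := ⟨hp⟩
  haveI : NeZero (p ^ n) := ⟨pow_ne_zero n hp.pos.ne'⟩
  set L := H.map φ with hL
  set K := φ.range with hK
  have hLK : L ≤ K := H.map_le_range φ
  -- claim 1 : relIndex divides H.index
  have h1 : L.relIndex K ∣ H.index := by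
    have e1 : L.relIndex K = (Subgroup.comap φ L).index := by
      rw [hK, MonoidHom.range_eq_map, ← Subgroup.relIndex_comap, Subgroup.relIndex_top_right]
    rw [e1]
    exact Subgroup.index_dvd_of_le (Subgroup.le_comap_map φ H)
  -- the kernel of the restriction of α to K is a p-group
  set β : K →* Matrix.GeneralLinearGroup (Fin m) (ZMod p) := α.comp K.subtype with hβ
  have hker : IsPGroup p β.ker := by
    intro g
    refine ⟨n - 1, ?_⟩
    have hg : α ((g : K) : Matrix.GeneralLinearGroup (Fin m) (ZMod (p ^ n))) = 1 := g.2
    have hm1 : (((g : K) : Matrix.GeneralLinearGroup (Fin m) (ZMod (p ^ n)))) ^ (p ^ (n - 1))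
        = 1 := aux4 p n m hp hn hm _ (by rw [← hα]; exact hg)
    have h2 : (g : K) ^ (p ^ (n - 1)) = 1 := by
      apply Subtype.ext
      simpa using hm1
    apply Subtype.ext
    simpa using h2
  obtain ⟨s, hs⟩ := hker.exists_card_eq
  -- L' sup ker = top
  set L' := L.subgroupOf K with hL'
  have hsup : L' ⊔ β.ker = ⊤ := by
    rw [eq_top_iff]
    rintro ⟨k, hk⟩ -
    have hk2 : α k ∈ L.map α := by
      rw [him]
      exact ⟨k, hk, rfl⟩
    obtain ⟨l, hl, hlk⟩ := hk2
    have hlK : l ∈ K := hLK hl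
    have hx : l⁻¹ * k ∈ K := K.mul_mem (K.inv_mem hlK) hk
    have ha : (⟨l, hlK⟩ : K) ∈ L' := by
      rw [hL', Subgroup.mem_subgroupOf]
      exact hl
    have hb : (⟨l⁻¹ * k, hx⟩ : K) ∈ β.ker := by
      rw [MonoidHom.mem_ker]
      show α (l⁻¹ * k) = 1
      rw [map_mul, map_inv, hlk, inv_mul_cancel]
    have hdec : (⟨k, hk⟩ : K) = ⟨l, hlK⟩ * ⟨l⁻¹ * k, hx⟩ := by
      apply Subtype.ext
      simp [mul_inv_cancel_left]
    rw [hdec]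
    exact Subgroup.mul_mem_sup ha hb
  -- index of L' divides card of ker
  have h2 : L'.index ∣ Nat.card β.ker := by
    set π := QuotientGroup.mk' β.ker with hπ
    have hmapker : β.ker.map π = ⊥ := by
      rw [Subgroup.map_eq_bot_iff, hπ, QuotientGroup.ker_mk']
    have hmap : L'.map π = ⊤ := by
      have : (L' ⊔ β.ker).map π = ⊤ := by
        rw [hsup, ← MonoidHom.range_eq_map]
        exact MonoidHom.range_eq_top.mpr (QuotientGroup.mk'_surjective _)
      rwa [Subgroup.map_sup, hmapker, sup_bot_eq] at this
    have hsurj : Function.Surjective (π.comp L'.subtype) := by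
      intro x
      have hx : x ∈ L'.map π := hmap ▸ Subgroup.mem_top x
      obtain ⟨l, hlL, rfl⟩ := hx
      exact ⟨⟨l, hlL⟩, rfl⟩
    obtain ⟨t, ht⟩ := Subgroup.card_dvd_of_surjective _ hsurj
    have e1 : Nat.card K = Nat.card L' * L'.index := (Subgroup.card_mul_index L').symm
    have e2 : Nat.card K = Nat.card (K ⧸ β.ker) * Nat.card β.ker :=
      Subgroup.card_eq_card_quotient_mul_card_subgroup β.ker
    have hq : 0 < Nat.card (K ⧸ β.ker) := Nat.card_pos
    refine ⟨t, ?_⟩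
    apply Nat.eq_of_mul_eq_mul_left hq
    rw [← e2, e1, ht]
    ring
  have h2' : L.relIndex K ∣ p ^ s := by
    have : L.relIndex K = L'.index := rfl
    rw [this, ← hs]
    exact h2
  have hcop2 : Nat.Coprime (L.relIndex K) (p ^ s) :=
    Nat.Coprime.pow_right s (Nat.Coprime.coprime_dvd_left h1 hcop)
  have hone : L.relIndex K = 1 := hcop2.eq_one_of_dvd h2'
  exact le_antisymm hLK (Subgroup.relIndex_eq_one.mp hone)
end

section
/- Let S and J be finite sets with |J| odd, and let a : S × J → ℤ/2ℤ be a function such that the total sum ∑_{v ∈ S} ∑_{j ∈ J} a(v,j) equals 0 in ℤ/2ℤ. Then there exists a function x : S → J such that ∑_{v ∈ S} a(v, x(v)) = 0 in ℤ/2ℤ. -/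
lemma exists_eq_sum_of_odd_card {J : Type*} [Fintype J] (hJ : Odd (Fintype.card J))
    (f : J → ZMod 2) : ∃ j : J, f j = ∑ i : J, f i := by
  by_contra hc
  push_neg at hc
  have hf : ∀ j, f j = (∑ i : J, f i) + 1 := by
    intro j
    have := hc j
    have h2 : ∀ x y : ZMod 2, x ≠ y → x = y + 1 := by decide
    exact h2 _ _ this
  have : ∑ i : J, f i = ∑ i : J, ((∑ i : J, f i) + 1) := by
    exact Finset.sum_congr rfl (fun j _ => hf j)
  rw [Finset.sum_const, Finset.card_univ, nsmul_eq_mul] at this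
  obtain ⟨k, hk⟩ := hJ
  have hcard : (Fintype.card J : ZMod 2) = 1 := by
    rw [hk]; push_cast; rw [show (2:ZMod 2) = 0 by decide]; ring
  rw [hcard, one_mul] at this
  have : (1 : ZMod 2) = 0 := by linear_combination -this
  exact one_ne_zero this

/-- Let `S` and `J` be finite sets with `|J|` odd, and let `a : S × J → ZMod 2` be such that
`∑_{v ∈ S} ∑_{j ∈ J} a(v,j) = 0`. Then there is `x : S → J` with `∑_{v ∈ S} a(v, x v) = 0`. -/
theorem stmt_6 {S J : Type*} [Fintype S] [Fintype J] (hJ : Odd (Fintype.card J))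
    (a : S × J → ZMod 2) (h : ∑ v : S, ∑ j : J, a (v, j) = 0) :
    ∃ x : S → J, ∑ v : S, a (v, x v) = 0 := by
  have hx : ∀ v : S, ∃ j : J, a (v, j) = ∑ i : J, a (v, i) :=
    fun v => exists_eq_sum_of_odd_card hJ (fun j => a (v, j))
  choose x hxv using hx
  refine ⟨x, ?_⟩
  calc ∑ v : S, a (v, x v) = ∑ v : S, ∑ j : J, a (v, j) :=
        Finset.sum_congr rfl (fun v _ => hxv v)
    _ = 0 := h
end
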